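/- Let w_1 ≥ w_2 ≥ w_3 ≥ w_4 be real numbers and let p(x) = (x - w_1)(x - w_2)(x - w_3)(x - w_4). Then p has a hyperbolic antiderivative if and only if 5(2w_2 - w_1 - w_4)(2w_3 - w_1 - w_4) + (w_1 - w_4)² ≥ 0. -/

import Mathlib

/-!
Every antiderivative of `p` is `F + c` for one fixed antiderivative `F`, which has local maxima
at `w₄, w₂` and local minima at `w₃, w₁`.

If `P = F + c` is real-rooted, Laguerre's inequality `P'² - P P'' ≥ 0` (strict off the roots of
`P`) gives `P ≤ 0` at a critical point where `P'' ≥ 0` and `P ≥ 0` where `P'' ≤ 0`; at `w₁` and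
`w₄` this says `F(w₁) ≤ F(w₄)`. Conversely, if `F(w₁) ≤ F(w₄)`, the shift
`P = F - max (F w₁) (F w₃)` changes sign weakly between `-∞, w₄, w₃, w₂, w₁, +∞`, and the five
roots found by the intermediate value theorem interlace with the critical points; a root found
twice is then a multiple critical point, so it is a root of `P` of higher multiplicity, and `P`
has five roots counted with multiplicity.

The criterion is `F(w₁) ≤ F(w₄)`, because
`F(w₁) - F(w₄) = -(w₁ - w₄)³ / 120 * (5 (2w₂ - w₁ - w₄)(2w₃ - w₁ - w₄) + (w₁ - w₄)²)`.
-/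

open Polynomial

/-- A real polynomial is hyperbolic if all of its complex roots are real. -/
def Hyperbolic (p : Polynomial ℝ) : Prop :=
  ∀ z ∈ (p.map (algebraMap ℝ ℂ)).roots, z.im = 0

theorem hyperbolic_iff_splits (P : ℝ[X]) : Hyperbolic P ↔ P.Splits := by
  refine ⟨fun h => Splits.of_splits_map (algebraMap ℝ ℂ) (IsAlgClosed.splits _) fun z hz =>
    ⟨z.re, Complex.ext rfl (h z hz).symm⟩, fun h z hz => ?_⟩
  obtain ⟨r, -, rfl⟩ := Multiset.mem_map.mp (h.roots_map (algebraMap ℝ ℂ) ▸ hz)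
  exact Complex.ofReal_im r

section Laguerre

variable {R : Type*} [CommRing R]

noncomputable def laguerre (P : R[X]) (x : R) : R :=
  (derivative P).eval x ^ 2 - P.eval x * (derivative (derivative P)).eval x

theorem laguerre_mul (f g : R[X]) (x : R) :
    laguerre (f * g) x = g.eval x ^ 2 * laguerre f x + f.eval x ^ 2 * laguerre g x := by
  simp only [laguerre, derivative_mul, derivative_add, eval_add, eval_mul]
  ring

variable [LinearOrder R] [IsStrictOrderedRing R]

theorem laguerre_nonneg_of_splits {P : R[X]} (hP : P.Splits) (x : R) : 0 ≤ laguerre P x := by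
  induction hP using Submonoid.closure_induction with
  | mem f hf => rcases hf with ⟨a, rfl⟩ | ⟨a, rfl⟩ <;> simp [laguerre]
  | one => simp [laguerre]
  | mul f g _ _ hf hg =>
    rw [laguerre_mul]
    positivity

theorem laguerre_pos_of_splits {P : R[X]} (hP : P.Splits) (hdeg : P.degree ≠ 0) {x : R}
    (hx : P.eval x ≠ 0) : 0 < laguerre P x := by
  obtain ⟨r, hr⟩ := hP.exists_eval_eq_zero hdeg
  obtain ⟨Q, rfl⟩ : X - C r ∣ P := dvd_iff_isRoot.mpr hr
  have hQx : Q.eval x ≠ 0 := by simp_all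
  have hlin : laguerre (X - C r) x = 1 := by simp [laguerre]
  have hQ := laguerre_nonneg_of_splits (splits_X_sub_C_mul_iff.mp hP) x
  rw [laguerre_mul, hlin]
  positivity

theorem Polynomial.Splits.eval_nonpos_of_isRoot_derivative {P : R[X]} (hP : P.Splits)
    (hdeg : P.degree ≠ 0) {t : R} (ht : (derivative P).IsRoot t)
    (h2 : 0 ≤ (derivative (derivative P)).eval t) : P.eval t ≤ 0 := by
  by_contra! hPt
  have := laguerre_pos_of_splits hP hdeg hPt.ne'
  rw [laguerre, ht.eq_zero] at this
  nlinarith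

theorem Polynomial.Splits.eval_nonneg_of_isRoot_derivative {P : R[X]} (hP : P.Splits)
    (hdeg : P.degree ≠ 0) {t : R} (ht : (derivative P).IsRoot t)
    (h2 : (derivative (derivative P)).eval t ≤ 0) : 0 ≤ P.eval t := by
  by_contra! hPt
  have := laguerre_pos_of_splits hP hdeg hPt.ne
  rw [laguerre, ht.eq_zero] at this
  nlinarith

end Laguerre

theorem List.count_ofFn_le_count_ofFn_add_one {α : Type*} [LinearOrder α] {n : ℕ}
    {ρ : Fin (n + 1) → α} {y : Fin n → α} (hρy : ∀ i, ρ i.castSucc ≤ y i)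
    (hyρ : ∀ i, y i ≤ ρ i.succ) (r : α) :
    (List.ofFn ρ).count r ≤ (List.ofFn y).count r + 1 := by
  induction n with
  | zero => simp only [List.ofFn_succ, List.ofFn_zero, List.count_singleton]; split_ifs <;> omega
  | succ n ih =>
    have hmono : Monotone ρ := Fin.monotone_iff_le_succ.mpr fun i => (hρy i).trans (hyρ i)
    rw [List.ofFn_succ (f := ρ), List.ofFn_succ (f := y), List.count_cons, List.count_cons]
    have htail := ih (ρ := fun i => ρ i.succ) (y := fun i => y i.succ)
      (fun i => hρy i.succ) (fun i => hyρ i.succ)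
    by_cases h0 : ρ 0 = r
    · by_cases hy0 : y 0 = r
      · simp only [h0, hy0, beq_self_eq_true, if_true]
        omega
      · have hlt : r < y 0 := lt_of_le_of_ne (h0 ▸ hρy 0) (Ne.symm hy0)
        have htail0 : (List.ofFn fun i => ρ i.succ).count r = 0 := by
          refine List.count_eq_zero.mpr fun hr => ?_
          obtain ⟨i, rfl⟩ := List.mem_ofFn.mp hr
          exact ((hyρ 0).trans (hmono (Fin.succ_le_succ_iff.mpr (Fin.zero_le i)))).not_gt hlt
        rw [htail0]
        split_ifs <;> omega
    · simp only [beq_iff_eq, h0, if_false]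
      split_ifs <;> omega

theorem Polynomial.ofFn_le_roots_of_interlace {R : Type*} [CommRing R] [IsDomain R] [CharZero R]
    [LinearOrder R] {P : R[X]} (hP : P ≠ 0) {n : ℕ} {ρ : Fin (n + 1) → R} {y : Fin n → R}
    (hρy : ∀ i, ρ i.castSucc ≤ y i) (hyρ : ∀ i, y i ≤ ρ i.succ) (hρ : ∀ i, P.IsRoot (ρ i))
    (hy : (List.ofFn y : Multiset R) ≤ (derivative P).roots) :
    (List.ofFn ρ : Multiset R) ≤ P.roots := by
  rw [Multiset.le_iff_count]
  intro r
  rw [Multiset.coe_count]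
  by_cases hr : r ∈ List.ofFn ρ
  · obtain ⟨i, rfl⟩ := List.mem_ofFn.mp hr
    have hmult := derivative_rootMultiplicity_of_root (hρ i)
    have hpos := (rootMultiplicity_pos hP).mpr (hρ i)
    have hyc := Multiset.count_le_of_le (ρ i) hy
    have hcount := List.count_ofFn_le_count_ofFn_add_one hρy hyρ (ρ i)
    rw [Multiset.coe_count, count_roots] at hyc
    rw [count_roots]
    omega
  · rw [List.count_eq_zero.mpr hr]
    exact Nat.zero_le _

theorem Polynomial.exists_gt_eval_pos {P : ℝ[X]} (hdeg : 0 < P.degree) (hlc : 0 < P.leadingCoeff)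
    (a : ℝ) : ∃ x, a < x ∧ 0 < P.eval x :=
  (((P.tendsto_atTop_of_leadingCoeff_nonneg hdeg hlc.le).eventually_gt_atTop 0).and
    (Filter.eventually_gt_atTop a)).exists.imp fun _ h => h.symm

theorem Polynomial.exists_lt_eval_neg {P : ℝ[X]} (hodd : Odd P.natDegree)
    (hlc : 0 < P.leadingCoeff) (a : ℝ) : ∃ x, x < a ∧ P.eval x < 0 := by
  have hnegX : (-X : ℝ[X]).natDegree = 1 := by simp
  have hdeg : (-P.comp (-X)).natDegree = P.natDegree := by
    rw [natDegree_neg, natDegree_comp, hnegX, mul_one]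
  have hlc' : (-P.comp (-X)).leadingCoeff = P.leadingCoeff := by
    rw [leadingCoeff_neg, leadingCoeff_comp (by rw [hnegX]; exact one_ne_zero), leadingCoeff_neg,
      leadingCoeff_X, hodd.neg_one_pow]
    ring
  obtain ⟨y, hy, hQy⟩ := exists_gt_eval_pos
    (natDegree_pos_iff_degree_pos.mp (hdeg ▸ hodd.pos)) (hlc' ▸ hlc) (-a)
  exact ⟨-y, by linarith, by simpa [eval_comp] using hQy⟩

theorem Polynomial.exists_isRoot_mem_Icc (P : ℝ[X]) {a b : ℝ} (hab : a ≤ b)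
    (h : 0 ∈ Set.uIcc (P.eval a) (P.eval b)) : ∃ x ∈ Set.Icc a b, P.IsRoot x := by
  obtain ⟨x, hx, hx0⟩ := intermediate_value_uIcc P.continuous.continuousOn h
  exact ⟨x, Set.uIcc_of_le hab ▸ hx, hx0⟩

theorem Polynomial.eval_le_eval_of_derivative_nonneg {P : ℝ[X]} {a b : ℝ} (hab : a ≤ b)
    (h : ∀ x ∈ Set.Icc a b, 0 ≤ (derivative P).eval x) : P.eval a ≤ P.eval b := by
  refine monotoneOn_of_deriv_nonneg (convex_Icc a b) P.continuous.continuousOn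
    P.differentiable.differentiableOn (fun x hx => ?_) (Set.left_mem_Icc.mpr hab)
    (Set.right_mem_Icc.mpr hab) hab
  rw [Polynomial.deriv]
  exact h x (interior_subset hx)

theorem Polynomial.eval_le_eval_of_derivative_nonpos {P : ℝ[X]} {a b : ℝ} (hab : a ≤ b)
    (h : ∀ x ∈ Set.Icc a b, (derivative P).eval x ≤ 0) : P.eval b ≤ P.eval a := by
  have := eval_le_eval_of_derivative_nonneg (P := -P) hab fun x hx => by
    simpa using h x hx
  simpa using this

theorem Polynomial.eval_sub_eval_of_derivative_eq {R : Type*} [CommRing R] [IsAddTorsionFree R]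
    {P Q : R[X]} (h : derivative P = derivative Q) (a b : R) :
    P.eval a - P.eval b = Q.eval a - Q.eval b := by
  have hc := eq_C_of_derivative_eq_zero (p := P - Q) (by rw [derivative_sub, h, sub_self])
  have ha := congrArg (eval a) hc
  have hb := congrArg (eval b) hc
  simp only [eval_sub, eval_C] at ha hb
  linear_combination ha - hb

section Quartic

variable (w₁ w₂ w₃ w₄ : ℝ)

noncomputable def quarticAntideriv : ℝ[X] :=
  C (1 / 5) * X ^ 5 - C ((w₁ + w₂ + w₃ + w₄) / 4) * X ^ 4
    + C ((w₁ * w₂ + w₁ * w₃ + w₁ * w₄ + w₂ * w₃ + w₂ * w₄ + w₃ * w₄) / 3) * X ^ 3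
    - C ((w₁ * w₂ * w₃ + w₁ * w₂ * w₄ + w₁ * w₃ * w₄ + w₂ * w₃ * w₄) / 2) * X ^ 2
    + C (w₁ * w₂ * w₃ * w₄) * X

theorem derivative_quarticAntideriv :
    derivative (quarticAntideriv w₁ w₂ w₃ w₄) =
      (X - C w₁) * (X - C w₂) * (X - C w₃) * (X - C w₄) := by
  apply Polynomial.funext
  intro x
  simp [quarticAntideriv]
  ring

theorem quarticAntideriv_eval_sub_eval :
    (quarticAntideriv w₁ w₂ w₃ w₄).eval w₁ - (quarticAntideriv w₁ w₂ w₃ w₄).eval w₄ =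
      -((w₁ - w₄) ^ 3 / 120) * (5 * (2 * w₂ - w₁ - w₄) * (2 * w₃ - w₁ - w₄) + (w₁ - w₄) ^ 2) := by
  simp only [quarticAntideriv, eval_add, eval_sub, eval_mul, eval_pow, eval_X, eval_C]
  ring

theorem natDegree_quarticAntideriv_add_C (c : ℝ) :
    (quarticAntideriv w₁ w₂ w₃ w₄ + C c).natDegree = 5 := by
  unfold quarticAntideriv
  compute_degree!

theorem leadingCoeff_quarticAntideriv_add_C (c : ℝ) :
    (quarticAntideriv w₁ w₂ w₃ w₄ + C c).leadingCoeff = 1 / 5 := by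
  rw [leadingCoeff, natDegree_quarticAntideriv_add_C]
  simp [quarticAntideriv]

theorem roots_quartic :
    ((X - C w₁) * (X - C w₂) * (X - C w₃) * (X - C w₄)).roots =
      (List.ofFn ![w₄, w₃, w₂, w₁] : Multiset ℝ) := by
  have : (X - C w₁) * (X - C w₂) * (X - C w₃) * (X - C w₄) =
      (((List.ofFn ![w₄, w₃, w₂, w₁] : Multiset ℝ)).map fun a => X - C a).prod := by
    simp [List.ofFn_succ]
    ring
  rw [this, roots_multiset_prod_X_sub_C]

variable {w₁ w₂ w₃ w₄}

theorem quartic_criterion_nonneg_of_splits (h12 : w₂ ≤ w₁) (h23 : w₃ ≤ w₂) (h34 : w₄ ≤ w₃)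
    {P : ℝ[X]} (hd : derivative P = (X - C w₁) * (X - C w₂) * (X - C w₃) * (X - C w₄))
    (hP : P.Splits) :
    0 ≤ 5 * (2 * w₂ - w₁ - w₄) * (2 * w₃ - w₁ - w₄) + (w₁ - w₄) ^ 2 := by
  have hdeg : P.degree ≠ 0 := fun h0 => by
    rw [eq_C_of_degree_eq_zero h0, derivative_C] at hd
    exact ((((monic_X_sub_C w₁).mul (monic_X_sub_C w₂)).mul (monic_X_sub_C w₃)).mul
      (monic_X_sub_C w₄)).ne_zero hd.symm
  have hd2 : ∀ x, (derivative (derivative P)).eval x =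
      (x - w₂) * (x - w₃) * (x - w₄) + (x - w₁) * (x - w₃) * (x - w₄)
        + (x - w₁) * (x - w₂) * (x - w₄) + (x - w₁) * (x - w₂) * (x - w₃) := by
    intro x
    simp only [hd, derivative_mul, derivative_sub, derivative_X, derivative_C, eval_add, eval_mul,
      eval_sub, eval_X, eval_C, eval_one, eval_zero]
    ring
  have h1 : P.eval w₁ ≤ 0 := hP.eval_nonpos_of_isRoot_derivative hdeg (by simp [hd]) <| by
    rw [hd2]
    nlinarith [mul_nonneg (sub_nonneg.2 h12) (sub_nonneg.2 (h23.trans h12))]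
  have h4 : 0 ≤ P.eval w₄ := hP.eval_nonneg_of_isRoot_derivative hdeg (by simp [hd]) <| by
    rw [hd2]
    nlinarith [mul_nonneg (sub_nonneg.2 h34) (sub_nonneg.2 (h34.trans h23))]
  have hdiff :=
    eval_sub_eval_of_derivative_eq (hd.trans (derivative_quarticAntideriv ..).symm) w₁ w₄
  rw [quarticAntideriv_eval_sub_eval] at hdiff
  rcases (h34.trans (h23.trans h12)).eq_or_lt with h14 | h14
  · obtain rfl : w₂ = w₁ := by linarith
    obtain rfl : w₃ = w₂ := by linarith
    subst h14
    norm_num [two_mul]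
  · have : 0 < (w₁ - w₄) ^ 3 := pow_pos (by linarith) 3
    nlinarith

theorem hyperbolic_quarticAntideriv_add_C (h12 : w₂ ≤ w₁) (h23 : w₃ ≤ w₂) (h34 : w₄ ≤ w₃)
    {c : ℝ} (h₁ : (quarticAntideriv w₁ w₂ w₃ w₄ + C c).eval w₁ ≤ 0)
    (h₂ : 0 ≤ (quarticAntideriv w₁ w₂ w₃ w₄ + C c).eval w₂)
    (h₃ : (quarticAntideriv w₁ w₂ w₃ w₄ + C c).eval w₃ ≤ 0)
    (h₄ : 0 ≤ (quarticAntideriv w₁ w₂ w₃ w₄ + C c).eval w₄) :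
    Hyperbolic (quarticAntideriv w₁ w₂ w₃ w₄ + C c) := by
  set P := quarticAntideriv w₁ w₂ w₃ w₄ + C c
  have hdeg : P.natDegree = 5 := natDegree_quarticAntideriv_add_C ..
  have hlc : 0 < P.leadingCoeff := by
    rw [leadingCoeff_quarticAntideriv_add_C]
    norm_num
  have hP0 : P ≠ 0 := ne_zero_of_natDegree_gt (n := 0) (by omega)
  obtain ⟨a, ha, hPa⟩ := exists_lt_eval_neg (hdeg ▸ ⟨2, rfl⟩) hlc w₄
  obtain ⟨b, hb, hPb⟩ := exists_gt_eval_pos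
    (natDegree_pos_iff_degree_pos.mp (by omega)) hlc w₁
  obtain ⟨ρ₀, hρ₀, hr₀⟩ := P.exists_isRoot_mem_Icc ha.le (Set.mem_uIcc.2 (.inl ⟨hPa.le, h₄⟩))
  obtain ⟨ρ₁, hρ₁, hr₁⟩ := P.exists_isRoot_mem_Icc h34 (Set.mem_uIcc.2 (.inr ⟨h₃, h₄⟩))
  obtain ⟨ρ₂, hρ₂, hr₂⟩ := P.exists_isRoot_mem_Icc h23 (Set.mem_uIcc.2 (.inl ⟨h₃, h₂⟩))
  obtain ⟨ρ₃, hρ₃, hr₃⟩ := P.exists_isRoot_mem_Icc h12 (Set.mem_uIcc.2 (.inr ⟨h₁, h₂⟩))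
  obtain ⟨ρ₄, hρ₄, hr₄⟩ := P.exists_isRoot_mem_Icc hb.le (Set.mem_uIcc.2 (.inl ⟨h₁, hPb.le⟩))
  have hroots : (List.ofFn ![ρ₀, ρ₁, ρ₂, ρ₃, ρ₄] : Multiset ℝ) ≤ P.roots := by
    refine ofFn_le_roots_of_interlace hP0 (y := ![w₄, w₃, w₂, w₁]) ?_ ?_ ?_ ?_
    · intro i; fin_cases i <;> simp [hρ₀.2, hρ₁.2, hρ₂.2, hρ₃.2]
    · intro i; fin_cases i <;> simp [hρ₁.1, hρ₂.1, hρ₃.1, hρ₄.1]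
    · intro i; fin_cases i <;> simpa
    · simp [P, derivative_quarticAntideriv, roots_quartic]
  rw [hyperbolic_iff_splits, splits_iff_card_roots]
  refine le_antisymm (card_roots' P) ?_
  simpa [hdeg] using Multiset.card_le_card hroots

theorem exists_hyperbolic_antideriv (h12 : w₂ ≤ w₁) (h23 : w₃ ≤ w₂) (h34 : w₄ ≤ w₃)
    (hcrit : 0 ≤ 5 * (2 * w₂ - w₁ - w₄) * (2 * w₃ - w₁ - w₄) + (w₁ - w₄) ^ 2) :
    ∃ P : ℝ[X], derivative P = (X - C w₁) * (X - C w₂) * (X - C w₃) * (X - C w₄) ∧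
      Hyperbolic P := by
  set F := quarticAntideriv w₁ w₂ w₃ w₄
  have hF : ∀ x, (derivative F).eval x = (x - w₁) * (x - w₂) * (x - w₃) * (x - w₄) := by
    simp [F, derivative_quarticAntideriv]
  have h32 : F.eval w₃ ≤ F.eval w₂ := eval_le_eval_of_derivative_nonneg h23 fun x ⟨hx₃, hx₂⟩ => by
    rw [hF]
    exact mul_nonneg (mul_nonneg (mul_nonneg_of_nonpos_of_nonpos (by linarith) (by linarith))
      (by linarith)) (by linarith)
  have h34' : F.eval w₃ ≤ F.eval w₄ := eval_le_eval_of_derivative_nonpos h34 fun x ⟨hx₄, hx₃⟩ => by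
    rw [hF]
    exact mul_nonpos_of_nonpos_of_nonneg (mul_nonpos_of_nonneg_of_nonpos
      (mul_nonneg_of_nonpos_of_nonpos (by linarith) (by linarith)) (by linarith)) (by linarith)
  have h12' : F.eval w₁ ≤ F.eval w₂ := eval_le_eval_of_derivative_nonpos h12 fun x ⟨hx₂, hx₁⟩ => by
    rw [hF]
    exact mul_nonpos_of_nonpos_of_nonneg (mul_nonpos_of_nonpos_of_nonneg
      (mul_nonpos_of_nonpos_of_nonneg (by linarith) (by linarith)) (by linarith)) (by linarith)
  have h14 : F.eval w₁ ≤ F.eval w₄ := by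
    have := quarticAntideriv_eval_sub_eval w₁ w₂ w₃ w₄
    have : 0 ≤ (w₁ - w₄) ^ 3 := pow_nonneg (by linarith) 3
    nlinarith
  refine ⟨F + C (-max (F.eval w₁) (F.eval w₃)), by simp [F, derivative_quarticAntideriv],
    hyperbolic_quarticAntideriv_add_C h12 h23 h34 ?_ ?_ ?_ ?_⟩ <;>
    simp only [eval_add, eval_C, ← sub_eq_add_neg, sub_nonneg, sub_nonpos]
  · exact le_max_left ..
  · exact max_le h12' h32
  · exact le_max_right ..
  · exact max_le h14 h34'

end Quartic

theorem stmt_8 (w₁ w₂ w₃ w₄ : ℝ) (h12 : w₂ ≤ w₁) (h23 : w₃ ≤ w₂) (h34 : w₄ ≤ w₃)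
    (p : Polynomial ℝ)
    (hp : p = (X - C w₁) * (X - C w₂) * (X - C w₃) * (X - C w₄)) :
    (∃ P : Polynomial ℝ, derivative P = p ∧ Hyperbolic P) ↔
      0 ≤ 5 * (2 * w₂ - w₁ - w₄) * (2 * w₃ - w₁ - w₄) + (w₁ - w₄) ^ 2 := by
  subst hp
  refine ⟨fun ⟨P, hd, hP⟩ => ?_, exists_hyperbolic_antideriv h12 h23 h34⟩
  exact quartic_criterion_nonneg_of_splits h12 h23 h34 hd ((hyperbolic_iff_splits P).mp hP)
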